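/- arXiv:2103.05080 — 5 statements merged into one kernel-verified Lean document; each statement's English description precedes it below -/
import Mathlib

section
/- Let q ∈ [1, ∞), ε > 0, and let s, t ∈ ℓ_q^{k+1} be vectors supported on the first k coordinates. Define m₁ = (s+t)/2 + (ε/2)‖s-t‖_q · e_{k+1} and m₂ = (s+t)/2 − (ε/2)‖s-t‖_q · e_{k+1}, where e_{k+1} is the (k+1)-st standard basis vector. Then ‖s - m₁‖_q = ‖s - m₂‖_q = ‖m₁ - t‖_q = ‖m₂ - t‖_q = (1/2)(1 + ε^q)^{1/q}‖s - t‖_q. -/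
open scoped BigOperators

noncomputable def lqNorm {k : ℕ} (q : ℝ) (x : Fin k → ℝ) : ℝ :=
  (∑ i, |x i| ^ q) ^ (1 / q)

lemma lqNorm_calc {k : ℕ} (q ε : ℝ) (hq : 1 ≤ q) (hε : 0 < ε)
    (u v : Fin (k+1) → ℝ) (h0 : u (Fin.last k) = 0)
    (hv : ∀ i : Fin k, |v i.castSucc| = |u i.castSucc| / 2)
    (hlast : |v (Fin.last k)| = (ε/2) * lqNorm q u) :
    lqNorm q v = (1/2) * (1 + ε ^ q) ^ (1/q) * lqNorm q u := by
  have hq0 : q ≠ 0 := by positivity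
  have hNnn : 0 ≤ lqNorm q u := by
    rw [lqNorm]
    exact Real.rpow_nonneg (Finset.sum_nonneg fun i _ => Real.rpow_nonneg (abs_nonneg _) q) _
  set S := ∑ i, |u i| ^ q with hSdef
  have hS : 0 ≤ S := Finset.sum_nonneg fun i _ => Real.rpow_nonneg (abs_nonneg _) q
  have hSsplit : S = ∑ i : Fin k, |u i.castSucc| ^ q := by
    rw [hSdef, Fin.sum_univ_castSucc, h0, abs_zero, Real.zero_rpow hq0, add_zero]
  have hNq : (lqNorm q u) ^ q = S := by
    rw [lqNorm, ← Real.rpow_mul hS, one_div_mul_cancel hq0, Real.rpow_one]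
  have hεq : (0:ℝ) ≤ 1 + ε ^ q := by positivity
  have hsum : ∑ i, |v i| ^ q = S * ((1 + ε ^ q) / 2 ^ q) := by
    rw [Fin.sum_univ_castSucc]
    have h1 : ∀ i : Fin k, |v i.castSucc| ^ q = |u i.castSucc| ^ q / 2 ^ q := by
      intro i
      rw [hv i, Real.div_rpow (abs_nonneg _) (by norm_num)]
    have h2 : |v (Fin.last k)| ^ q = ε ^ q / 2 ^ q * S := by
      rw [hlast, Real.mul_rpow (by positivity) hNnn, hNq,
        Real.div_rpow hε.le (by norm_num)]
    rw [Finset.sum_congr rfl fun i _ => h1 i, ← Finset.sum_div, ← hSsplit, h2]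
    ring
  have h2q : ((2:ℝ) ^ q) ^ (1/q) = 2 := by
    rw [← Real.rpow_mul (by norm_num : (0:ℝ) ≤ 2), mul_one_div_cancel hq0, Real.rpow_one]
  have h2qpos : (0:ℝ) < 2 ^ q := Real.rpow_pos_of_pos (by norm_num) q
  rw [lqNorm, hsum, Real.mul_rpow hS (by positivity),
    Real.div_rpow hεq h2qpos.le, h2q, lqNorm]
  ring

/-- distances from `s`, `t` to the two perturbed midpoints `m₁`, `m₂`. -/
theorem thin_laakso_midpoint_distances {k : ℕ} (q ε : ℝ) (hq : 1 ≤ q) (hε : 0 < ε)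
    (s t m₁ m₂ : Fin (k+1) → ℝ)
    (hs : s (Fin.last k) = 0) (ht : t (Fin.last k) = 0)
    (hm₁ : m₁ = fun i => (s i + t i) / 2 +
      (ε / 2) * lqNorm q (s - t) * (if i = Fin.last k then 1 else 0))
    (hm₂ : m₂ = fun i => (s i + t i) / 2 -
      (ε / 2) * lqNorm q (s - t) * (if i = Fin.last k then 1 else 0)) :
    lqNorm q (s - m₁) = (1/2) * (1 + ε ^ q) ^ (1/q) * lqNorm q (s - t) ∧
    lqNorm q (s - m₂) = (1/2) * (1 + ε ^ q) ^ (1/q) * lqNorm q (s - t) ∧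
    lqNorm q (m₁ - t) = (1/2) * (1 + ε ^ q) ^ (1/q) * lqNorm q (s - t) ∧
    lqNorm q (m₂ - t) = (1/2) * (1 + ε ^ q) ^ (1/q) * lqNorm q (s - t) := by
  subst hm₁ hm₂
  set c := ε / 2 * lqNorm q (s - t) with hcdef
  have h0 : (s - t) (Fin.last k) = 0 := by simp [hs, ht]
  have hN : 0 ≤ lqNorm q (s - t) := by
    rw [lqNorm]
    exact Real.rpow_nonneg (Finset.sum_nonneg fun i _ => Real.rpow_nonneg (abs_nonneg _) q) _
  have hne : ∀ i : Fin k, i.castSucc ≠ Fin.last k := fun i => (Fin.castSucc_lt_last i).ne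
  have hc : 0 ≤ c := by rw [hcdef]; positivity
  have habs : ∀ a b : ℝ, |(a - b) / 2| = |a - b| / 2 := by
    intro a b; rw [abs_div]; norm_num
  refine ⟨?_, ?_, ?_, ?_⟩ <;> refine lqNorm_calc q ε hq hε _ _ h0 (fun i => ?_) ?_ <;>
    simp only [Pi.sub_apply] <;>
    first
    | (rw [if_neg (hne i)]
       rw [show ∀ a b : ℝ, a - ((a + b) / 2 + c * 0) = (a - b) / 2 from fun a b => by ring,
         habs])
    | (rw [if_neg (hne i)]
       rw [show ∀ a b : ℝ, a - ((a + b) / 2 - c * 0) = (a - b) / 2 from fun a b => by ring,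
         habs])
    | (rw [if_neg (hne i)]
       rw [show ∀ a b : ℝ, (a + b) / 2 + c * 0 - b = (a - b) / 2 from fun a b => by ring,
         habs])
    | (rw [if_neg (hne i)]
       rw [show ∀ a b : ℝ, (a + b) / 2 - c * 0 - b = (a - b) / 2 from fun a b => by ring,
         habs])
    | (rw [if_pos trivial, hs, ht,
         show (0:ℝ) - ((0 + 0) / 2 + c * 1) = -c from by ring, abs_neg, abs_of_nonneg hc])
    | (rw [if_pos trivial, hs, ht,
         show (0:ℝ) - ((0 + 0) / 2 - c * 1) = c from by ring, abs_of_nonneg hc])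
    | (rw [if_pos trivial, hs, ht,
         show ((0:ℝ) + 0) / 2 + c * 1 - 0 = c from by ring, abs_of_nonneg hc])
    | (rw [if_pos trivial, hs, ht,
         show ((0:ℝ) + 0) / 2 - c * 1 - 0 = -c from by ring, abs_neg, abs_of_nonneg hc])
end

section
/- Let Y be a Banach space with modulus of uniform convexity δ_Y, let X be a metric space containing six points s, a, m₁, m₂, b, t satisfying: d(s,m₁) = d(s,m₂) = d(m₁,t) = d(m₂,t) = (1/2)(1+ε^p)^{1/p} d(s,t) and d(m₁,m₂) = ε·d(s,t), for some ε > 0 and p ∈ (1,∞) with d(s,t) > 0. If f : X → Y satisfies d(x,y) ≤ ‖f(x) − f(y)‖ ≤ D·d(x,y) for all x, y among these six points, then ‖f(s) − f(t)‖ ≤ D·d(s,t)·(1+ε^p)^{1/p}·(1 − δ_Y(2ε/(D(1+ε^p)^{1/p}))). -/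
/-- The modulus of uniform convexity of a normed space `Y`:
`δ_Y(t) = inf {1 - ‖(x+y)/2‖ : ‖x‖ ≤ 1, ‖y‖ ≤ 1, ‖x - y‖ ≥ t}`. -/
noncomputable def uniformConvexityModulus (Y : Type*) [NormedAddCommGroup Y] (t : ℝ) : ℝ :=
  sInf {r : ℝ | ∃ x y : Y, ‖x‖ ≤ 1 ∧ ‖y‖ ≤ 1 ∧ t ≤ ‖x - y‖ ∧ r = 1 - ‖x + y‖ / 2}

/-!
Both midpoints `f m₁`, `f m₂` lie within `R = D · ½(1+εᵖ)^{1/p} · d(s,t)` of `f s` and of `f t`,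
while `‖f m₁ - f m₂‖ ≥ ε · d(s,t)`. Uniform convexity, rescaled to the ball of radius `R`, then
bounds `‖(f m₁ - z) + (f m₂ - z)‖ ≤ 2R(1 - δ)` for `z = f s` and `z = f t`, and the difference of
these two vectors is `2 (f t - f s)`.
-/

section UniformConvexityModulus

variable {Y : Type*} [NormedAddCommGroup Y]

theorem uniformConvexityModulus_le {t : ℝ} {x y : Y} (hx : ‖x‖ ≤ 1) (hy : ‖y‖ ≤ 1)
    (ht : t ≤ ‖x - y‖) : uniformConvexityModulus Y t ≤ 1 - ‖x + y‖ / 2 := by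
  refine csInf_le ⟨0, ?_⟩ ⟨x, y, hx, hy, ht, rfl⟩
  rintro r ⟨u, v, hu, hv, -, rfl⟩
  linarith [norm_add_le u v]

variable [NormedSpace ℝ Y]

theorem norm_add_le_of_norm_le_of_le_norm_sub {R τ : ℝ} {x y : Y} (hx : ‖x‖ ≤ R) (hy : ‖y‖ ≤ R)
    (hxy : τ * R ≤ ‖x - y‖) : ‖x + y‖ ≤ 2 * R * (1 - uniformConvexityModulus Y τ) := by
  rcases (norm_nonneg x).trans hx |>.eq_or_lt with hR | hR
  · subst hR
    rw [norm_le_zero_iff.1 hx, norm_le_zero_iff.1 hy]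
    simp
  have hscale {w : Y} : ‖R⁻¹ • w‖ = ‖w‖ / R := by
    rw [norm_smul, Real.norm_of_nonneg (inv_nonneg.2 hR.le), inv_mul_eq_div]
  have hδ := uniformConvexityModulus_le (t := τ) (x := R⁻¹ • x) (y := R⁻¹ • y)
    (by rwa [hscale, div_le_one hR]) (by rwa [hscale, div_le_one hR])
    (by rwa [← smul_sub, hscale, le_div_iff₀ hR])
  rw [← smul_add, hscale] at hδ
  have := (div_le_iff₀ hR).1 (show ‖x + y‖ / R ≤ 2 * (1 - uniformConvexityModulus Y τ) by linarith)
  linarith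

theorem norm_sub_le_of_two_midpoints {R τ : ℝ} {s t m₁ m₂ : Y}
    (hs₁ : ‖m₁ - s‖ ≤ R) (hs₂ : ‖m₂ - s‖ ≤ R) (ht₁ : ‖m₁ - t‖ ≤ R) (ht₂ : ‖m₂ - t‖ ≤ R)
    (hm : τ * R ≤ ‖m₁ - m₂‖) : ‖s - t‖ ≤ 2 * R * (1 - uniformConvexityModulus Y τ) := by
  have hs := norm_add_le_of_norm_le_of_le_norm_sub hs₁ hs₂ (by rwa [sub_sub_sub_cancel_right])
  have ht := norm_add_le_of_norm_le_of_le_norm_sub ht₁ ht₂ (by rwa [sub_sub_sub_cancel_right])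
  have hsum : (2 : ℝ) • (s - t) = ((m₁ - t) + (m₂ - t)) - ((m₁ - s) + (m₂ - s)) := by
    rw [two_smul]; abel
  have := norm_sub_le ((m₁ - t) + (m₂ - t)) ((m₁ - s) + (m₂ - s))
  rw [← hsum, norm_smul, Real.norm_two] at this
  linarith

end UniformConvexityModulus

theorem contraction_uniformly_convex_general {X Y : Type*} [MetricSpace X]
    [NormedAddCommGroup Y] [NormedSpace ℝ Y]
    (p ε D : ℝ)
    (s a m₁ m₂ b t : X)
    (h1 : dist s m₁ = (1/2) * (1 + ε ^ p) ^ (1/p) * dist s t)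
    (h2 : dist s m₂ = (1/2) * (1 + ε ^ p) ^ (1/p) * dist s t)
    (h3 : dist m₁ t = (1/2) * (1 + ε ^ p) ^ (1/p) * dist s t)
    (h4 : dist m₂ t = (1/2) * (1 + ε ^ p) ^ (1/p) * dist s t)
    (h5 : dist m₁ m₂ = ε * dist s t)
    (f : X → Y)
    (hf : ∀ x ∈ ({s, a, m₁, m₂, b, t} : Set X), ∀ y ∈ ({s, a, m₁, m₂, b, t} : Set X),
      dist x y ≤ ‖f x - f y‖ ∧ ‖f x - f y‖ ≤ D * dist x y) :
    ‖f s - f t‖ ≤ D * dist s t * (1 + ε ^ p) ^ (1/p) *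
      (1 - uniformConvexityModulus Y (2 * ε / (D * (1 + ε ^ p) ^ (1/p)))) := by
  set A := (1 + ε ^ p) ^ (1/p)
  have hm : 2 * ε / (D * A) * (D * ((1/2) * A * dist s t)) ≤ ‖f m₁ - f m₂‖ := by
    rcases eq_or_ne (D * A) 0 with hDA | hDA
    · simp [hDA]
    · obtain ⟨hD, hA⟩ := mul_ne_zero_iff.1 hDA
      calc _ = ε * dist s t := by field_simp
        _ = dist m₁ m₂ := h5.symm
        _ ≤ ‖f m₁ - f m₂‖ := (hf m₁ (by simp) m₂ (by simp)).1
  have key := norm_sub_le_of_two_midpoints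
    (h1 ▸ dist_comm s m₁ ▸ (hf m₁ (by simp) s (by simp)).2)
    (h2 ▸ dist_comm s m₂ ▸ (hf m₂ (by simp) s (by simp)).2)
    (h3 ▸ (hf m₁ (by simp) t (by simp)).2)
    (h4 ▸ (hf m₂ (by simp) t (by simp)).2) hm
  linarith

/-- the contraction lemma for bi-Lipschitz maps into a uniformly
convex Banach space (Lemma `contraction_uc`). -/
theorem contraction_uniformly_convex {X Y : Type*} [MetricSpace X]
    [NormedAddCommGroup Y] [NormedSpace ℝ Y] [CompleteSpace Y]
    (p ε D : ℝ) (hp1 : 1 < p) (hε : 0 < ε) (hD : 1 ≤ D)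
    (s a m₁ m₂ b t : X) (hst : 0 < dist s t)
    (h1 : dist s m₁ = (1/2) * (1 + ε ^ p) ^ (1/p) * dist s t)
    (h2 : dist s m₂ = (1/2) * (1 + ε ^ p) ^ (1/p) * dist s t)
    (h3 : dist m₁ t = (1/2) * (1 + ε ^ p) ^ (1/p) * dist s t)
    (h4 : dist m₂ t = (1/2) * (1 + ε ^ p) ^ (1/p) * dist s t)
    (h5 : dist m₁ m₂ = ε * dist s t)
    (f : X → Y)
    (hf : ∀ x ∈ ({s, a, m₁, m₂, b, t} : Set X), ∀ y ∈ ({s, a, m₁, m₂, b, t} : Set X),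
      dist x y ≤ ‖f x - f y‖ ∧ ‖f x - f y‖ ≤ D * dist x y) :
    ‖f s - f t‖ ≤ D * dist s t * (1 + ε ^ p) ^ (1/p) *
      (1 - uniformConvexityModulus Y (2 * ε / (D * (1 + ε ^ p) ^ (1/p)))) :=
  contraction_uniformly_convex_general p ε D s a m₁ m₂ b t h1 h2 h3 h4 h5 f hf
end

section
/- Let (X, d) be a metric space and p ∈ [1, ∞). Suppose there exists C ∈ (0, 2^p] such that for all x₁, x₂, x₃, x₄ ∈ X: d(x₁,x₃)^p + d(x₂,x₄)^p ≤ (C/4)(d(x₁,x₂)^p + d(x₂,x₃)^p + d(x₃,x₄)^p + d(x₄,x₁)^p). Then for every x, y ∈ X, η ∈ (0,1), and any w, z both lying in Mid(x, y, η), we have d(w,z) ≤ ((1+η)^p − 1)^{1/p} · d(x,y). -/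
/-- the 4-point inequality bounds the diameter of approximate
midpoint sets. -/
theorem four_point_ineq_midpoints {X : Type*} [MetricSpace X] (p C : ℝ)
    (hp : 1 ≤ p) (hC0 : 0 < C) (hC : C ≤ 2 ^ p)
    (h4pt : ∀ x₁ x₂ x₃ x₄ : X,
      dist x₁ x₃ ^ p + dist x₂ x₄ ^ p ≤
        C / 4 * (dist x₁ x₂ ^ p + dist x₂ x₃ ^ p + dist x₃ x₄ ^ p + dist x₄ x₁ ^ p))
    (x y w z : X) (η : ℝ) (hη0 : 0 < η) (hη1 : η < 1)
    (hw : max (dist x w) (dist y w) ≤ (1 + η) / 2 * dist x y)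
    (hz : max (dist x z) (dist y z) ≤ (1 + η) / 2 * dist x y) :
    dist w z ≤ ((1 + η) ^ p - 1) ^ (1/p) * dist x y := by
  have hp0 : (0:ℝ) < p := lt_of_lt_of_le one_pos hp
  set D := dist x y with hD
  set M := (1 + η) / 2 * D with hM
  have hM0 : 0 ≤ M := by
    have : (0:ℝ) ≤ (1 + η) / 2 := by linarith
    exact mul_nonneg this dist_nonneg
  have hxw : dist x w ≤ M := le_trans (le_max_left _ _) hw
  have hyw : dist w y ≤ M := by rw [dist_comm]; exact le_trans (le_max_right _ _) hw
  have hxz : dist z x ≤ M := by rw [dist_comm]; exact le_trans (le_max_left _ _) hz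
  have hyz : dist y z ≤ M := le_trans (le_max_right _ _) hz
  have key := h4pt x w y z
  have hpow : ∀ a : ℝ, 0 ≤ a → a ≤ M → a ^ p ≤ M ^ p := fun a ha h =>
    Real.rpow_le_rpow ha h hp0.le
  have hsum : dist x w ^ p + dist w y ^ p + dist y z ^ p + dist z x ^ p ≤ 4 * M ^ p := by
    have h1 := hpow _ dist_nonneg hxw
    have h2 := hpow _ dist_nonneg hyw
    have h3 := hpow _ dist_nonneg hyz
    have h4 := hpow _ dist_nonneg hxz
    linarith
  have hMp : 0 ≤ M ^ p := Real.rpow_nonneg hM0 p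
  have step : D ^ p + dist w z ^ p ≤ (1 + η) ^ p * D ^ p := by
    have h1 : C / 4 * (dist x w ^ p + dist w y ^ p + dist y z ^ p + dist z x ^ p)
        ≤ C / 4 * (4 * M ^ p) := by
      apply mul_le_mul_of_nonneg_left hsum (by positivity)
    have h2 : C / 4 * (4 * M ^ p) = C * M ^ p := by ring
    have h3 : C * M ^ p ≤ 2 ^ p * M ^ p := mul_le_mul_of_nonneg_right hC hMp
    have h4 : (2:ℝ) ^ p * M ^ p = (1 + η) ^ p * D ^ p := by
      rw [hM, Real.mul_rpow (by linarith) dist_nonneg, Real.div_rpow (by linarith) (by norm_num)]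
      have h2p : (2:ℝ) ^ p ≠ 0 := (Real.rpow_pos_of_pos two_pos p).ne'
      rw [hD]
      field_simp
    calc D ^ p + dist w z ^ p ≤ _ := key
      _ ≤ C / 4 * (4 * M ^ p) := h1
      _ = C * M ^ p := h2
      _ ≤ 2 ^ p * M ^ p := h3
      _ = (1 + η) ^ p * D ^ p := h4
  have hwz : dist w z ^ p ≤ ((1 + η) ^ p - 1) * D ^ p := by
    have hD1 : D ^ p * 1 ≤ D ^ p := by linarith [Real.rpow_nonneg (dist_nonneg : 0 ≤ D) p]
    nlinarith [Real.rpow_nonneg (dist_nonneg : 0 ≤ D) p]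
  have hcoef : 0 ≤ (1 + η) ^ p - 1 := by
    have := Real.one_le_rpow (by linarith : (1:ℝ) ≤ 1 + η) hp0.le
    linarith
  have := Real.rpow_le_rpow (Real.rpow_nonneg dist_nonneg p) hwz (by positivity : (0:ℝ) ≤ 1/p)
  rwa [Real.mul_rpow hcoef (Real.rpow_nonneg dist_nonneg p), one_div,
    Real.rpow_rpow_inv dist_nonneg hp0.ne',
    Real.rpow_rpow_inv dist_nonneg hp0.ne', ← one_div] at this
end

section
/- Let (X,d) be a metric space containing points s, m₁, m₂, t with d(s,m₁) = d(s,m₂) = d(m₁,t) = d(m₂,t) = (1/2)(1+ε^q)^{1/q} d(s,t) and d(m₁,m₂) = ε·d(s,t), where ε > 0 satisfies (1+ε^q)^{1/q} ≤ 2 and d(s,t) > 0. Let (Y, d_Y) be a metric space such that for all y₁, y₂ ∈ Y, any two points in the approximate midpoint set Mid(y₁, y₂, η_Y(t)) are at distance less than t·d_Y(y₁,y₂), where η_Y is the rounded ball modulus. If f : X → Y satisfies (1/A)d(x,y) ≤ d_Y(f(x), f(y)) ≤ B·d(x,y) on {s, m₁, m₂, t}, then d_Y(f(s), f(t)) ≤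 B·d(s,t)·(1+ε^q)^{1/q}·(1 − (1/2)η_Y(ε/(2AB))). -/
/-! If `f` stretched `s, t` too much, the images of `m₁, m₂` would lie in the approximate midpoint
set `Mid(f s, f t, η τ)` of the rounded ball, whose diameter is below `τ · d(f s, f t) ≤ τ B d(s, t)`;
with `τ = ε / (2AB)` this is half the lower bound `d(m₁, m₂) / A = ε d(s, t) / A`. -/

section

variable {Y : Type*} [MetricSpace Y]

/-- The approximate midpoint set `Mid(y₁, y₂, θ)`. -/
def approxMidpoints (y₁ y₂ : Y) (θ : ℝ) : Set Y :=
  {z | max (dist y₁ z) (dist y₂ z) ≤ (1 + θ) / 2 * dist y₁ y₂}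

lemma mem_approxMidpoints_of_dist_le {y₁ y₂ z : Y} {θ r : ℝ} (h₁ : dist y₁ z ≤ r)
    (h₂ : dist z y₂ ≤ r) (hr : r ≤ (1 + θ) / 2 * dist y₁ y₂) : z ∈ approxMidpoints y₁ y₂ θ :=
  max_le (h₁.trans hr) ((dist_comm y₂ z ▸ h₂).trans hr)

lemma dist_le_of_far_approxMidpoints {y₁ y₂ w z : Y} {θ τ r : ℝ} (hθ : 0 ≤ θ ∧ θ ≤ 1)
    (hmid : y₁ ≠ y₂ → ∀ w ∈ approxMidpoints y₁ y₂ θ, ∀ z ∈ approxMidpoints y₁ y₂ θ,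
      dist w z < τ * dist y₁ y₂)
    (hw₁ : dist y₁ w ≤ r) (hw₂ : dist w y₂ ≤ r) (hz₁ : dist y₁ z ≤ r) (hz₂ : dist z y₂ ≤ r)
    (hwz : τ * dist y₁ y₂ ≤ dist w z) :
    dist y₁ y₂ ≤ 2 * r * (1 - θ / 2) := by
  obtain ⟨hθ₀, hθ₁⟩ := hθ
  by_contra! hlt
  have hr : 0 ≤ r := dist_nonneg.trans hw₁
  have hne : y₁ ≠ y₂ := dist_pos.1 <| lt_of_le_of_lt (by nlinarith) hlt
  -- `(1 + θ)(1 - θ/2) = 1 + θ(1 - θ)/2 ≥ 1`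
  have hr_le : r ≤ (1 + θ) / 2 * dist y₁ y₂ := by
    nlinarith [mul_nonneg (mul_nonneg hθ₀ (sub_nonneg.2 hθ₁)) hr]
  exact (hmid hne w (mem_approxMidpoints_of_dist_le hw₁ hw₂ hr_le)
    z (mem_approxMidpoints_of_dist_le hz₁ hz₂ hr_le)).not_ge hwz

end

theorem contraction_rounded_ball_general {X Y : Type*} [MetricSpace X] [MetricSpace Y]
    (q ε A B : ℝ) (hε : 0 < ε)
    (hA : 0 < A) (hB : 0 < B)
    (s m₁ m₂ t : X)
    (h1 : dist s m₁ = (1/2) * (1 + ε ^ q) ^ (1/q) * dist s t)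
    (h2 : dist s m₂ = (1/2) * (1 + ε ^ q) ^ (1/q) * dist s t)
    (h3 : dist m₁ t = (1/2) * (1 + ε ^ q) ^ (1/q) * dist s t)
    (h4 : dist m₂ t = (1/2) * (1 + ε ^ q) ^ (1/q) * dist s t)
    (h5 : dist m₁ m₂ = ε * dist s t)
    (η : ℝ → ℝ) (hη01 : ∀ τ, 0 ≤ η τ ∧ η τ ≤ 1)
    (hη : ∀ τ : ℝ, 0 < τ → ∀ y₁ y₂ w z : Y, y₁ ≠ y₂ →
      max (dist y₁ w) (dist y₂ w) ≤ (1 + η τ) / 2 * dist y₁ y₂ →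
      max (dist y₁ z) (dist y₂ z) ≤ (1 + η τ) / 2 * dist y₁ y₂ →
      dist w z < τ * dist y₁ y₂)
    (f : X → Y)
    (hf : ∀ x ∈ ({s, m₁, m₂, t} : Set X), ∀ x' ∈ ({s, m₁, m₂, t} : Set X),
      (1/A) * dist x x' ≤ dist (f x) (f x') ∧ dist (f x) (f x') ≤ B * dist x x') :
    dist (f s) (f t) ≤ B * dist s t * (1 + ε ^ q) ^ (1/q) *
      (1 - (1/2) * η (ε / (2 * A * B))) := by
  have hτ : 0 < ε / (2 * A * B) := by positivity
  have hs : s ∈ ({s, m₁, m₂, t} : Set X) := by simp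
  have hm₁ : m₁ ∈ ({s, m₁, m₂, t} : Set X) := by simp
  have hm₂ : m₂ ∈ ({s, m₁, m₂, t} : Set X) := by simp
  have ht : t ∈ ({s, m₁, m₂, t} : Set X) := by simp
  have hwz : ε / (2 * A * B) * dist (f s) (f t) ≤ dist (f m₁) (f m₂) :=
    calc ε / (2 * A * B) * dist (f s) (f t)
        ≤ ε / (2 * A * B) * (B * dist s t) := by gcongr; exact (hf s hs t ht).2
      _ = (1 / A) * dist m₁ m₂ / 2 := by rw [h5]; field_simp
      _ ≤ (1 / A) * dist m₁ m₂ := half_le_self (by positivity)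
      _ ≤ dist (f m₁) (f m₂) := (hf m₁ hm₁ m₂ hm₂).1
  set r := B * ((1 / 2) * (1 + ε ^ q) ^ (1 / q) * dist s t)
  refine (dist_le_of_far_approxMidpoints (r := r) (hη01 _)
    (fun hne w hw z hz => hη _ hτ _ _ w z hne hw hz)
    ((hf s hs m₁ hm₁).2.trans_eq (by rw [h1])) ((hf m₁ hm₁ t ht).2.trans_eq (by rw [h3]))
    ((hf s hs m₂ hm₂).2.trans_eq (by rw [h2])) ((hf m₂ hm₂ t ht).2.trans_eq (by rw [h4]))
    hwz).trans_eq ?_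
  ring

/-- the contraction lemma for rounded ball target spaces
(Lemma `contraction_rb`). Here `η` is the rounded ball modulus of `Y`: for every
`τ > 0` and distinct `y₁ y₂`, any two points of the approximate midpoint set
`Mid(y₁, y₂, η τ)` lie at distance less than `τ · d_Y(y₁, y₂)` (so `η τ ∈ [0,1]`). -/
theorem contraction_rounded_ball {X Y : Type*} [MetricSpace X] [MetricSpace Y]
    (q ε A B : ℝ) (hq : 1 ≤ q) (hε : 0 < ε)
    (hε2 : (1 + ε ^ q) ^ (1/q) ≤ 2)
    (hA : 0 < A) (hB : 0 < B) (hAB : 1 ≤ A * B)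
    (s m₁ m₂ t : X) (hst : 0 < dist s t)
    (h1 : dist s m₁ = (1/2) * (1 + ε ^ q) ^ (1/q) * dist s t)
    (h2 : dist s m₂ = (1/2) * (1 + ε ^ q) ^ (1/q) * dist s t)
    (h3 : dist m₁ t = (1/2) * (1 + ε ^ q) ^ (1/q) * dist s t)
    (h4 : dist m₂ t = (1/2) * (1 + ε ^ q) ^ (1/q) * dist s t)
    (h5 : dist m₁ m₂ = ε * dist s t)
    (η : ℝ → ℝ) (hη01 : ∀ τ, 0 ≤ η τ ∧ η τ ≤ 1)
    (hη : ∀ τ : ℝ, 0 < τ → ∀ y₁ y₂ w z : Y, y₁ ≠ y₂ →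
      max (dist y₁ w) (dist y₂ w) ≤ (1 + η τ) / 2 * dist y₁ y₂ →
      max (dist y₁ z) (dist y₂ z) ≤ (1 + η τ) / 2 * dist y₁ y₂ →
      dist w z < τ * dist y₁ y₂)
    (f : X → Y)
    (hf : ∀ x ∈ ({s, m₁, m₂, t} : Set X), ∀ x' ∈ ({s, m₁, m₂, t} : Set X),
      (1/A) * dist x x' ≤ dist (f x) (f x') ∧ dist (f x) (f x') ≤ B * dist x x') :
    dist (f s) (f t) ≤ B * dist s t * (1 + ε ^ q) ^ (1/q) *
      (1 - (1/2) * η (ε / (2 * A * B))) :=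
  contraction_rounded_ball_general q ε A B hε hA hB s m₁ m₂ t h1 h2 h3 h4 h5 η hη01 hη f hf
end

section
/- Let p ∈ [1,∞), ε > 0, k ≥ 0, and let s, t ∈ L_p[0, k+2] be supported on [0, k+1]. For each i ∈ ℕ define m_i = (s+t)/2 + Σ_{r=1}^{2^i} (−1)^r ε‖s−t‖_p χ_{[k+1+(r−1)2^{−i}, k+1+r·2^{−i}]}. Then for every i, ‖s − m_i‖_p = (1/2)(1 + (2ε)^p)^{1/p} ‖s − t‖_p. -/
/-!
On `[0, k+1]` every step of the perturbation vanishes, so `s - mᵢ = (s - t)/2` there. On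
`(k+1, k+2]` we have `s = t = 0`, and off the countable dyadic grid exactly one step is active,
so `|s - mᵢ| = ε‖s - t‖_p` almost everywhere. Integrating,
`‖s - mᵢ‖_p^p = 2^{-p}‖s - t‖_p^p + ε^p‖s - t‖_p^p`.
-/

open MeasureTheory Set

section DyadicSteps

variable {c d x : ℝ} {n : ℕ}

lemma sum_mul_indicator_Icc_eq_zero_of_lt (a : ℕ → ℝ) (hd : 0 ≤ d) (hx : x < c) :
    ∑ r ∈ Finset.Icc 1 n, a r * (Icc (c + ((r : ℝ) - 1) / d) (c + r / d)).indicator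
      (fun _ => (1 : ℝ)) x = 0 := by
  refine Finset.sum_eq_zero fun r hr => ?_
  have hr1 : (1 : ℝ) ≤ r := by exact_mod_cast (Finset.mem_Icc.1 hr).1
  have hcr : c ≤ c + ((r : ℝ) - 1) / d := le_add_of_nonneg_right (div_nonneg (by linarith) hd)
  rw [indicator_of_notMem fun hmem => (hcr.trans hmem.1).not_gt hx, mul_zero]

lemma mem_Icc_add_div_iff (hd : 0 < d) (r : ℝ) :
    x ∈ Icc (c + (r - 1) / d) (c + r / d) ↔ r - 1 ≤ d * (x - c) ∧ d * (x - c) ≤ r := by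
  rw [mem_Icc, ← le_sub_iff_add_le', div_le_iff₀' hd, ← sub_le_iff_le_add' (a := x),
    le_div_iff₀' hd]

lemma sum_mul_indicator_Icc_eq_of_notMem_range (a : ℕ → ℝ) (hd : 0 < d)
    (hx : x ∈ Ioc c (c + n / d)) (hgrid : x ∉ range fun j : ℕ => c + j / d) :
    ∑ r ∈ Finset.Icc 1 n, a r * (Icc (c + ((r : ℝ) - 1) / d) (c + r / d)).indicator
      (fun _ => (1 : ℝ)) x = a ⌈d * (x - c)⌉₊ := by
  set y := d * (x - c)
  have hy0 : 0 < y := mul_pos hd (sub_pos.2 hx.1)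
  have hyn : y ≤ n := by
    have h := hx.2
    rwa [← sub_le_iff_le_add', le_div_iff₀' hd] at h
  have hy_ne : y ≠ ⌈y⌉₊ := fun h =>
    hgrid ⟨⌈y⌉₊, by simp only [← h, y]; field_simp; ring⟩
  have hmem : ⌈y⌉₊ ∈ Finset.Icc 1 n :=
    Finset.mem_Icc.2 ⟨Nat.one_le_iff_ne_zero.2 (Nat.ceil_pos.2 hy0).ne', Nat.ceil_le.2 hyn⟩
  -- Any active step `b ≠ ⌈y⌉₊` would force `⌈y⌉₊ ≤ b - 1 ≤ y ≤ ⌈y⌉₊`.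
  refine (Finset.sum_eq_single_of_mem _ hmem fun b _ hb => ?_).trans ?_
  · rw [indicator_of_notMem, mul_zero]
    rw [mem_Icc_add_div_iff hd]
    rintro ⟨hb1, hb2⟩
    refine hb (le_antisymm ?_ (Nat.ceil_le.2 hb2))
    by_contra! hlt
    have : ((⌈y⌉₊ : ℕ) : ℝ) ≤ b - 1 := by
      rw [le_sub_iff_add_le]; exact_mod_cast hlt
    exact hy_ne (le_antisymm (Nat.le_ceil y) (this.trans hb1))
  · rw [indicator_of_mem, mul_one]
    rw [mem_Icc_add_div_iff hd]
    exact ⟨by linarith [Nat.ceil_lt_add_one hy0.le], Nat.le_ceil y⟩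

lemma ae_abs_sum_mul_indicator_Icc_eq {a : ℕ → ℝ} {L : ℝ} (ha : ∀ r, |a r| = L)
    (hd : 0 < d) :
    ∀ᵐ x, x ∈ Ioc c (c + n / d) →
      |∑ r ∈ Finset.Icc 1 n, a r * (Icc (c + ((r : ℝ) - 1) / d) (c + r / d)).indicator
        (fun _ => (1 : ℝ)) x| = L := by
  have hnull : volume (range fun j : ℕ => c + j / d) = 0 := (countable_range _).measure_zero _
  filter_upwards [measure_eq_zero_iff_ae_notMem.1 hnull] with x hgrid hx
  rw [sum_mul_indicator_Icc_eq_of_notMem_range a hd hx hgrid, ha]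

end DyadicSteps

lemma setIntegral_abs_sub_midpoint_add_rpow {s t w : ℝ → ℝ} {a b c L p : ℝ} (hp : 0 < p)
    (hac : a ≤ c) (hcb : c ≤ b) (hs : ∀ x, c < x → s x = 0) (ht : ∀ x, c < x → t x = 0)
    (hint : IntegrableOn (fun x => |s x - t x| ^ p) (Icc a b))
    (hw_left : ∀ x < c, w x = 0) (hw_right : ∀ᵐ x, x ∈ Ioc c b → |w x| = L) :
    ∫ x in Icc a b, |s x - ((s x + t x) / 2 + w x)| ^ p =
      (1 / 2) ^ p * (∫ x in Icc a b, |s x - t x| ^ p) + (b - c) * L ^ p := by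
  have hae : (fun x => |s x - ((s x + t x) / 2 + w x)| ^ p) =ᵐ[volume.restrict (Icc a b)]
      fun x => (1 / 2) ^ p * |s x - t x| ^ p + (Ioc c b).indicator (fun _ => L ^ p) x := by
    have hc : ∀ᵐ x, x ≠ c := by simp [ae_iff, measure_singleton]
    filter_upwards [ae_restrict_mem measurableSet_Icc, ae_restrict_of_ae hw_right,
      ae_restrict_of_ae hc] with x hx hwx hxc
    rcases hxc.lt_or_gt with hlt | hgt
    · rw [hw_left x hlt, indicator_of_notMem fun h => h.1.not_gt hlt, add_zero, add_zero,
        ← Real.mul_rpow (by norm_num) (abs_nonneg _), ← abs_of_pos (one_half_pos (α := ℝ)),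
        ← abs_mul]
      ring_nf
    · rw [hs x hgt, ht x hgt, indicator_of_mem (show x ∈ Ioc c b from ⟨hgt, hx.2⟩)]
      simp [hwx ⟨hgt, hx.2⟩, Real.zero_rpow hp.ne']
  rw [integral_congr_ae hae, integral_add (hint.const_mul _)
      ((integrable_const _).indicator measurableSet_Ioc), integral_const_mul,
    integral_indicator_const _ measurableSet_Ioc, measureReal_restrict_apply measurableSet_Ioc,
    inter_eq_left.2 (Ioc_subset_Icc_self.trans (Icc_subset_Icc_left hac)),
    Real.volume_real_Ioc_of_le hcb, smul_eq_mul]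

lemma half_rpow_mul_add_rpow_rpow_one_div {p ε x : ℝ} (hp : 0 < p) (hε : 0 ≤ ε)
    (hx : 0 ≤ x) :
    ((1 / 2) ^ p * x ^ p + (ε * x) ^ p) ^ (1 / p) = 1 / 2 * (1 + (2 * ε) ^ p) ^ (1 / p) * x := by
  have hsum : (1 / 2) ^ p * x ^ p + (ε * x) ^ p = (1 / 2) ^ p * (1 + (2 * ε) ^ p) * x ^ p := by
    have h2 : (1 / 2 : ℝ) ^ p * 2 ^ p = 1 := by
      rw [← Real.mul_rpow (by norm_num) (by norm_num)]; norm_num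
    rw [Real.mul_rpow hε hx, Real.mul_rpow zero_le_two hε]
    linear_combination (-(ε ^ p * x ^ p)) * h2
  rw [hsum, Real.mul_rpow (by positivity) (by positivity),
    Real.mul_rpow (by positivity) (by positivity), one_div p,
    Real.rpow_rpow_inv (by norm_num) hp.ne', Real.rpow_rpow_inv hx hp.ne']

/-- in `L_p[0,k+2]`, the distance from `s` to each branch point
`m_i` of the thin countably branching diamond equals
`(1/2)(1+(2ε)^p)^{1/p} ‖s−t‖_p`.  The `L_p` norm is written as
`(∫ |·|^p)^{1/p}` over `[0, k+2]`. -/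
theorem thin_diamond_Lp_branch_distance (p ε : ℝ) (hp : 1 ≤ p) (hε : 0 < ε)
    (k : ℕ) (s t : ℝ → ℝ)
    (hs : ∀ x : ℝ, (k : ℝ) + 1 < x → s x = 0)
    (ht : ∀ x : ℝ, (k : ℝ) + 1 < x → t x = 0)
    (hint : IntegrableOn (fun x => |s x - t x| ^ p) (Set.Icc 0 ((k : ℝ) + 2)))
    (N : ℝ)
    (hN : N = (∫ x in Set.Icc (0 : ℝ) ((k : ℝ) + 2), |s x - t x| ^ p) ^ (1/p))
    (i : ℕ) (m : ℝ → ℝ)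
    (hm : m = fun x => (s x + t x) / 2 + ∑ r ∈ Finset.Icc (1 : ℕ) (2 ^ i),
      (-1 : ℝ) ^ r * ε * N *
        Set.indicator
          (Set.Icc ((k : ℝ) + 1 + ((r : ℝ) - 1) / 2 ^ i) ((k : ℝ) + 1 + (r : ℝ) / 2 ^ i))
          (fun _ => (1 : ℝ)) x) :
    (∫ x in Set.Icc (0 : ℝ) ((k : ℝ) + 2), |s x - m x| ^ p) ^ (1/p) =
      (1/2) * (1 + (2 * ε) ^ p) ^ (1/p) * N := by
  have hp0 : 0 < p := by linarith
  have hN0 : 0 ≤ N := hN ▸ by positivity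
  have hNp : ∫ x in Icc 0 ((k : ℝ) + 2), |s x - t x| ^ p = N ^ p := by
    rw [hN, one_div, Real.rpow_inv_rpow (integral_nonneg fun x => by positivity) hp0.ne']
  have hsteps := ae_abs_sum_mul_indicator_Icc_eq (c := (k : ℝ) + 1) (d := 2 ^ i) (n := 2 ^ i)
    (a := fun r => (-1) ^ r * ε * N) (L := ε * N)
    (fun r => by simp [abs_mul, abs_of_pos hε, abs_of_nonneg hN0]) (by positivity)
  rw [show (k : ℝ) + 1 + ((2 ^ i : ℕ) : ℝ) / 2 ^ i = k + 2 by
    rw [Nat.cast_pow, Nat.cast_ofNat, div_self (by positivity)]; ring] at hsteps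
  subst hm
  rw [setIntegral_abs_sub_midpoint_add_rpow hp0 (by positivity) (by linarith) hs ht hint
      (fun x hx => sum_mul_indicator_Icc_eq_zero_of_lt _ (by positivity) hx) hsteps,
    hNp, show (k : ℝ) + 2 - (k + 1) = 1 by ring, one_mul,
    half_rpow_mul_add_rpow_rpow_one_div hp0 hε.le hN0]
end
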